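/- Let 0 < p₀ < 1/2, 0 < p₁ < 1/2 and R ∈ [0,1]. Then for all p₀′ ∈ (0, p₀] and p₁′ ∈ (0, p₁] one has E(R,p₀′,p₁′) ≥ E(R,p₀,p₁); consequently the minimum of E(R,p₀′,p₁′) over p₀′ ∈ (0,p₀], p₁′ ∈ (0,p₁] equals E(R,p₀,p₁), attained at p₀′ = p₀, p₁′ = p₁. -/

import Mathlib

open Real Set

/-- Binary entropy function (base 2), with `0 * log 0 = 0`. -/
noncomputable def binH (x : ℝ) : ℝ := -(x * Real.logb 2 x) - (1 - x) * Real.logb 2 (1 - x)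

/-- Binary Kullback–Leibler divergence (base 2). -/
noncomputable def binD (q p : ℝ) : ℝ :=
  q * Real.logb 2 (q / p) + (1 - q) * Real.logb 2 ((1 - q) / (1 - p))

/-- The error exponent `E(R,p₀,p₁)`:
`min_{q₀,q₁ ∈ [0,1]} [(D(q₁‖p₁)+D(q₀‖p₀))/2 + |1 − R − (H(q₀)+H(q₁))/2|⁺]`. -/
noncomputable def Eexp (R p0 p1 : ℝ) : ℝ :=
  sInf {v : ℝ | ∃ q0 ∈ Set.Icc (0:ℝ) 1, ∃ q1 ∈ Set.Icc (0:ℝ) 1,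
    v = (binD q1 p1 + binD q0 p0) / 2 + max (1 - R - (binH q0 + binH q1) / 2) 0}

lemma binH_eq (x : ℝ) : binH x = Real.binEntropy x / Real.log 2 := by
  simp [binH, Real.binEntropy, Real.logb, Real.log_inv]
  ring

lemma binH_mono {a b : ℝ} (ha : 0 ≤ a) (hab : a ≤ b) (hb : b ≤ 1/2) : binH a ≤ binH b := by
  rw [binH_eq, binH_eq]
  have h2 : (0:ℝ) < Real.log 2 := Real.log_pos (by norm_num)
  have : Real.binEntropy a ≤ Real.binEntropy b := by
    rcases eq_or_lt_of_le hab with h | h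
    · rw [h]
    · exact (Real.binEntropy_strictMonoOn ⟨ha, by norm_num at hb ⊢; linarith⟩
        ⟨le_trans ha hab, by norm_num at hb ⊢; linarith⟩ h).le
  exact div_le_div_of_nonneg_right this h2.le

lemma binD_self {p : ℝ} (hp0 : 0 < p) (hp1 : p < 1) : binD p p = 0 := by
  have h1 : p / p = 1 := div_self hp0.ne'
  have h2 : (1 - p) / (1 - p) = 1 := div_self (by linarith)
  simp [binD, h1, h2]

lemma binD_eq (q p : ℝ) : binD q p =
    (q * Real.log (q / p) + (1 - q) * Real.log ((1 - q) / (1 - p))) / Real.log 2 := by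
  simp [binD, Real.logb]; ring

lemma binD_nonneg {q p : ℝ} (hq0 : 0 ≤ q) (hq1 : q ≤ 1) (hp0 : 0 < p) (hp1 : p < 1) :
    0 ≤ binD q p := by
  have h2 : (0:ℝ) < Real.log 2 := Real.log_pos (by norm_num)
  have key : ∀ a b : ℝ, 0 < a → 0 < b → a - b ≤ a * Real.log (a / b) := by
    intro a b ha hb
    have hlb := Real.log_le_sub_one_of_pos (div_pos hb ha)
    have hlog : Real.log (a / b) = - Real.log (b / a) := by
      rw [← Real.log_inv, inv_div]
    have hm := mul_le_mul_of_nonneg_left hlb ha.le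
    have h3 : a * (b / a - 1) = b - a := by field_simp
    rw [hlog, mul_neg]
    linarith [hm.trans_eq h3]
  rcases eq_or_lt_of_le hq0 with h | hq0'
  · have : binD q p = Real.logb 2 (1 / (1 - p)) := by simp [binD, ← h]
    rw [this]
    apply Real.logb_nonneg (by norm_num)
    rw [le_div_iff₀ (by linarith)]; linarith
  rcases eq_or_lt_of_le hq1 with h | hq1'
  · have : binD q p = Real.logb 2 (1 / p) := by simp [binD, h]
    rw [this]
    apply Real.logb_nonneg (by norm_num)
    rw [le_div_iff₀ hp0]; linarith
  have k1 := key q p hq0' hp0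
  have k2 := key (1 - q) (1 - p) (by linarith) (by linarith)
  have : 0 ≤ q * Real.log (q / p) + (1 - q) * Real.log ((1 - q) / (1 - p)) := by linarith
  rw [binD_eq]
  positivity

lemma binD_anti {p' p q : ℝ} (hp' : 0 < p') (hpp : p' ≤ p) (hpq : p ≤ q) (hq1 : q ≤ 1)
    (hp1 : p < 1) : binD q p ≤ binD q p' := by
  have h2 : (0:ℝ) < Real.log 2 := Real.log_pos (by norm_num)
  have hq0 : 0 < q := lt_of_lt_of_le hp' (le_trans hpp hpq)
  have hp0 : 0 < p := lt_of_lt_of_le hp' hpp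
  have hp'1 : p' < 1 := lt_of_le_of_lt hpp hp1
  -- difference identity
  have e1 : q * Real.log (q / p') - q * Real.log (q / p) = q * Real.log (p / p') := by
    rw [Real.log_div hq0.ne' hp'.ne', Real.log_div hq0.ne' hp0.ne',
      Real.log_div hp0.ne' hp'.ne']
    ring
  have e2 : (1 - q) * Real.log ((1 - q) / (1 - p')) - (1 - q) * Real.log ((1 - q) / (1 - p))
      = (1 - q) * Real.log ((1 - p) / (1 - p')) := by
    rcases eq_or_lt_of_le hq1 with h | h
    · rw [← h]; simp
    · rw [Real.log_div (by linarith : (1:ℝ) - q ≠ 0) (by linarith : (1:ℝ) - p' ≠ 0),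
        Real.log_div (by linarith : (1:ℝ) - q ≠ 0) (by linarith : (1:ℝ) - p ≠ 0),
        Real.log_div (by linarith : (1:ℝ) - p ≠ 0) (by linarith : (1:ℝ) - p' ≠ 0)]
      ring
  -- lower bounds
  have l1 : 1 - p' / p ≤ Real.log (p / p') := by
    have := Real.one_sub_inv_le_log_of_pos (div_pos hp0 hp')
    rwa [inv_div] at this
  have l2 : 1 - (1 - p') / (1 - p) ≤ Real.log ((1 - p) / (1 - p')) := by
    have := Real.one_sub_inv_le_log_of_pos (div_pos (by linarith : (0:ℝ) < 1 - p)
      (by linarith : (0:ℝ) < 1 - p'))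
    rwa [inv_div] at this
  have key : 0 ≤ q * Real.log (p / p') + (1 - q) * Real.log ((1 - p) / (1 - p')) := by
    have b1 : q * (1 - p' / p) ≤ q * Real.log (p / p') :=
      mul_le_mul_of_nonneg_left l1 hq0.le
    have b2 : (1 - q) * (1 - (1 - p') / (1 - p)) ≤ (1 - q) * Real.log ((1 - p) / (1 - p')) :=
      mul_le_mul_of_nonneg_left l2 (by linarith)
    have hne : (1:ℝ) - p ≠ 0 := by linarith
    have h1 : 1 - p' / p = (p - p') / p := by field_simp
    have h2' : 1 - (1 - p') / (1 - p) = -((p - p') / (1 - p)) := by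
      field_simp
      ring
    rw [h1] at b1; rw [h2'] at b2
    have : 0 ≤ q * ((p - p') / p) + (1 - q) * (-((p - p') / (1 - p))) := by
      have expand : q * ((p - p') / p) + (1 - q) * (-((p - p') / (1 - p)))
          = (p - p') * (q - p) / (p * (1 - p)) := by
        field_simp
        ring
      rw [expand]
      apply div_nonneg
      · nlinarith
      · nlinarith
    linarith
  have hbd : binD q p' - binD q p = (q * Real.log (p / p')
      + (1 - q) * Real.log ((1 - p) / (1 - p'))) / Real.log 2 := by
    rw [binD_eq, binD_eq, div_sub_div_same]
    congr 1
    linarith [e1, e2]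
  linarith [div_nonneg key h2.le]

/-- Lemma 1 of the paper: `E(R,p₀′,p₁′) ≥ E(R,p₀,p₁)` for all
`p₀′ ∈ (0,p₀]`, `p₁′ ∈ (0,p₁]`, and the minimum over this range equals `E(R,p₀,p₁)`,
attained at `p₀′ = p₀`, `p₁′ = p₁`. -/
theorem stmt2 (p0 p1 R : ℝ) (hp00 : 0 < p0) (hp01 : p0 < 1/2)
    (hp10 : 0 < p1) (hp11 : p1 < 1/2) (hR0 : 0 ≤ R) (hR1 : R ≤ 1) :
    (∀ p0' ∈ Set.Ioc 0 p0, ∀ p1' ∈ Set.Ioc 0 p1, Eexp R p0 p1 ≤ Eexp R p0' p1') ∧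
    IsLeast {v : ℝ | ∃ p0' ∈ Set.Ioc (0:ℝ) p0, ∃ p1' ∈ Set.Ioc (0:ℝ) p1,
      v = Eexp R p0' p1'} (Eexp R p0 p1) := by
  have main : ∀ p0' ∈ Set.Ioc 0 p0, ∀ p1' ∈ Set.Ioc 0 p1, Eexp R p0 p1 ≤ Eexp R p0' p1' := by
    intro p0' hp0' p1' hp1'
    obtain ⟨hp0'0, hp0'le⟩ := hp0'
    obtain ⟨hp1'0, hp1'le⟩ := hp1'
    have hp0'1 : p0' < 1 := by linarith
    have hp1'1 : p1' < 1 := by linarith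
    -- bddBelow of the p0,p1-set
    have hbdd : BddBelow {v : ℝ | ∃ q0 ∈ Set.Icc (0:ℝ) 1, ∃ q1 ∈ Set.Icc (0:ℝ) 1,
        v = (binD q1 p1 + binD q0 p0) / 2 + max (1 - R - (binH q0 + binH q1) / 2) 0} := by
      refine ⟨0, ?_⟩
      rintro v ⟨q0, hq0, q1, hq1, rfl⟩
      have d0 := binD_nonneg hq0.1 hq0.2 hp00 (by linarith)
      have d1 := binD_nonneg hq1.1 hq1.2 hp10 (by linarith)
      have := le_max_right (1 - R - (binH q0 + binH q1) / 2) 0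
      linarith
    apply le_csInf
    · exact ⟨(binD 0 p1' + binD 0 p0') / 2 + max (1 - R - (binH 0 + binH 0) / 2) 0,
        0, ⟨le_refl 0, by norm_num⟩, 0, ⟨le_refl 0, by norm_num⟩, rfl⟩
    rintro v ⟨q0, hq0, q1, hq1, rfl⟩
    set q0' := max q0 p0 with hq0'def
    set q1' := max q1 p1 with hq1'def
    have hq0'mem : q0' ∈ Set.Icc (0:ℝ) 1 :=
      ⟨le_trans hq0.1 (le_max_left _ _), max_le hq0.2 (by linarith)⟩
    have hq1'mem : q1' ∈ Set.Icc (0:ℝ) 1 :=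
      ⟨le_trans hq1.1 (le_max_left _ _), max_le hq1.2 (by linarith)⟩
    have step1 : Eexp R p0 p1 ≤ (binD q1' p1 + binD q0' p0) / 2
        + max (1 - R - (binH q0' + binH q1') / 2) 0 :=
      csInf_le hbdd ⟨q0', hq0'mem, q1', hq1'mem, rfl⟩
    -- binD comparisons
    have c0 : binD q0' p0 ≤ binD q0 p0' := by
      rcases le_or_gt p0 q0 with h | h
      · have : q0' = q0 := max_eq_left h
        rw [this]
        exact binD_anti hp0'0 hp0'le h hq0.2 (by linarith)
      · have : q0' = p0 := max_eq_right h.le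
        rw [this, binD_self hp00 (by linarith)]
        exact binD_nonneg hq0.1 hq0.2 hp0'0 hp0'1
    have c1 : binD q1' p1 ≤ binD q1 p1' := by
      rcases le_or_gt p1 q1 with h | h
      · have : q1' = q1 := max_eq_left h
        rw [this]
        exact binD_anti hp1'0 hp1'le h hq1.2 (by linarith)
      · have : q1' = p1 := max_eq_right h.le
        rw [this, binD_self hp10 (by linarith)]
        exact binD_nonneg hq1.1 hq1.2 hp1'0 hp1'1
    -- binH comparisons
    have h0 : binH q0 ≤ binH q0' := by
      rcases le_or_gt p0 q0 with h | h
      · have e : q0' = q0 := max_eq_left h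
        rw [e]
      · have e : q0' = p0 := max_eq_right h.le
        rw [e]; exact binH_mono hq0.1 h.le hp01.le
    have h1 : binH q1 ≤ binH q1' := by
      rcases le_or_gt p1 q1 with h | h
      · have e : q1' = q1 := max_eq_left h
        rw [e]
      · have e : q1' = p1 := max_eq_right h.le
        rw [e]; exact binH_mono hq1.1 h.le hp11.le
    have hmax : max (1 - R - (binH q0' + binH q1') / 2) 0
        ≤ max (1 - R - (binH q0 + binH q1) / 2) 0 := by
      apply max_le_max _ le_rfl
      linarith
    linarith
  refine ⟨main, ?_, ?_⟩
  · exact ⟨p0, ⟨hp00, le_refl p0⟩, p1, ⟨hp10, le_refl p1⟩, rfl⟩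
  · rintro v ⟨p0', hp0', p1', hp1', rfl⟩
    exact main p0' hp0' p1' hp1'
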